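/- arXiv:2409.06221 — 8 statements merged into one kernel-verified Lean document; each statement's English description precedes it below -/
import Mathlib

section
/- Let R be a commutative ring. The space of semivaluations on R, i.e. the set of functions v : R → [0,+∞] satisfying v(ab) = v(a) + v(b), v(a+b) ≥ min(v(a), v(b)) for all a,b ∈ R, v(1) = 0 and v(0) = +∞, equipped with the topology of pointwise convergence, is a compact Hausdorff topological space. -/
/-- A semivaluation on a commutative ring `R`: a function `v : R → [0,+∞]` with
`v (a*b) = v a + v b`, `v (a+b) ≥ min (v a) (v b)`, `v 1 = 0` and `v 0 = +∞`. -/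
def IsSemival {R : Type*} [CommRing R] (v : R → ENNReal) : Prop :=
  (∀ a b : R, v (a * b) = v a + v b) ∧
  (∀ a b : R, min (v a) (v b) ≤ v (a + b)) ∧
  v 1 = 0 ∧ v 0 = ⊤

open scoped ENNReal

theorem isClosed_setOf_isSemival (R : Type*) [CommRing R] :
    IsClosed {v : R → ℝ≥0∞ | IsSemival v} := by
  simp only [IsSemival, Set.ofPred_and, Set.ofPred_forall]
  refine .inter (isClosed_iInter fun a => isClosed_iInter fun b => ?_) <|
    .inter (isClosed_iInter fun a => isClosed_iInter fun b => ?_) <|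
    .inter (isClosed_eq (continuous_apply 1) continuous_const)
      (isClosed_eq (continuous_apply 0) continuous_const)
  · exact isClosed_eq (continuous_apply _) ((continuous_apply a).add (continuous_apply b))
  · exact isClosed_le ((continuous_apply a).min (continuous_apply b)) (continuous_apply _)

/-- The space of semivaluations on a commutative ring, with the topology of
pointwise convergence (subspace of the product `∏_{a ∈ R} [0,+∞]`), is a
compact Hausdorff topological space. -/
theorem semivaluationSpace_compactSpace_and_t2Space (R : Type*) [CommRing R] :
    CompactSpace {v : R → ENNReal // IsSemival v} ∧
    T2Space {v : R → ENNReal // IsSemival v} :=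
  ⟨isCompact_iff_compactSpace.mp (isClosed_setOf_isSemival R).isCompact, inferInstance⟩
end

section
/- Let R be a commutative ring and let 𝒮(R) be the semiring of finitely generated ideals of R. The map sending a tropical character χ on 𝒮(R) to the function R → [0,+∞], a ↦ χ(aR), is a homeomorphism from the space of tropical characters on 𝒮(R) onto the space of semivaluations on R (both spaces carrying the topology of pointwise convergence); its inverse sends a semivaluation v to the character I ↦ inf_{f ∈ I} v(f). -/
/-- A tropical character on a commutative semiring. -/
def IsTropChar {S : Type*} [CommSemiring S] (χ : S → ENNReal) : Prop :=
  (∀ a b : S, χ (a * b) = χ a + χ b) ∧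
  (∀ a b : S, χ (a + b) = min (χ a) (χ b)) ∧
  χ 1 = 0 ∧ χ 0 = ⊤

/-- The semiring `𝒮(R)` of finitely generated ideals of a commutative ring `R`,
as a subsemiring of the semiring of all ideals (with ideal addition and
multiplication). -/
def fgIdeals (R : Type*) [CommRing R] : Subsemiring (Ideal R) where
  carrier := {I : Ideal R | Submodule.FG I}
  zero_mem' := by
    show Submodule.FG (0 : Ideal R)
    simpa using Submodule.fg_bot
  one_mem' := by
    show Submodule.FG (1 : Ideal R)
    rw [Ideal.one_eq_top, ← Ideal.span_singleton_one]
    exact Submodule.fg_span (Set.finite_singleton 1)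
  add_mem' := by
    intro I J hI hJ
    simpa [Submodule.add_eq_sup] using Submodule.FG.sup hI hJ
  mul_mem' := fun hI hJ => Submodule.FG.mul hI hJ

section Aux
variable {R : Type*} [CommRing R]

/-- span of a singleton as an element of `fgIdeals R`. -/
abbrev sg (a : R) : fgIdeals R :=
  ⟨Ideal.span {a}, Submodule.fg_span (Set.finite_singleton a)⟩

/-- span of a finset as an element of `fgIdeals R`. -/
abbrev sp (S : Finset R) : fgIdeals R :=
  ⟨Ideal.span (S : Set R), Submodule.fg_span S.finite_toSet⟩

noncomputable def Fmap (χ : fgIdeals R → ENNReal) : R → ENNReal := fun a => χ (sg a)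

noncomputable def Gmap (v : R → ENNReal) : fgIdeals R → ENNReal :=
  fun I => ⨅ f ∈ (I.1 : Ideal R), v f

lemma tropChar_antitone {χ : fgIdeals R → ENNReal} (hχ : IsTropChar χ)
    {I J : fgIdeals R} (hIJ : I.1 ≤ J.1) : χ J ≤ χ I := by
  have : I + J = J := Subtype.ext (by simpa [Submodule.add_eq_sup] using sup_eq_right.2 hIJ)
  calc χ J = χ (I + J) := by rw [this]
    _ = min (χ I) (χ J) := hχ.2.1 I J
    _ ≤ χ I := min_le_left _ _

lemma isSemival_Fmap {χ : fgIdeals R → ENNReal} (hχ : IsTropChar χ) :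
    IsSemival (Fmap χ) := by
  obtain ⟨hmul, hadd, hone, hzero⟩ := hχ
  refine ⟨fun a b => ?_, fun a b => ?_, ?_, ?_⟩
  · have : sg (a * b) = sg a * sg b := Subtype.ext (by
      show Ideal.span {a * b} = Ideal.span {a} * Ideal.span {b}
      rw [Ideal.span_singleton_mul_span_singleton])
    simpa [Fmap, this] using hmul (sg a) (sg b)
  · have hle : (sg (a + b)).1 ≤ (sg a + sg b).1 := by
      show Ideal.span {a + b} ≤ Ideal.span {a} ⊔ Ideal.span {b}
      rw [Ideal.span_le]
      intro x hx
      rw [Set.mem_singleton_iff] at hx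
      subst hx
      exact Submodule.add_mem_sup (Ideal.mem_span_singleton_self a)
        (Ideal.mem_span_singleton_self b)
    have := tropChar_antitone ⟨hmul, hadd, hone, hzero⟩ hle
    rw [hadd] at this
    exact this
  · have : sg (1 : R) = 1 := Subtype.ext (by
      show Ideal.span {(1 : R)} = (1 : Ideal R)
      simp [Ideal.one_eq_top])
    simpa [Fmap, this] using hone
  · have : sg (0 : R) = 0 := Subtype.ext (by
      show Ideal.span {(0 : R)} = (0 : Ideal R)
      simp)
    simpa [Fmap, this] using hzero

lemma semival_le_of_mem_span {v : R → ENNReal} (hv : IsSemival v)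
    (S : Finset R) {f : R} (hf : f ∈ Ideal.span (S : Set R)) :
    (⨅ g ∈ S, v g) ≤ v f := by
  obtain ⟨hmul, hadd, hone, hzero⟩ := hv
  refine Submodule.span_induction (p := fun f _ => (⨅ g ∈ S, v g) ≤ v f)
    ?_ ?_ ?_ ?_ hf
  · intro x hx
    exact iInf₂_le x hx
  · show (⨅ g ∈ S, v g) ≤ v 0
    rw [hzero]; exact le_top
  · intro x y _ _ hx hy
    exact le_trans (le_min hx hy) (hadd x y)
  · intro r x _ hx
    show (⨅ g ∈ S, v g) ≤ v (r • x)
    have : v (r • x) = v r + v x := by simpa [smul_eq_mul] using hmul r x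
    rw [this]
    exact le_trans hx le_add_self

lemma Gmap_span_finset {v : R → ENNReal} (hv : IsSemival v)
    {I : fgIdeals R} {S : Finset R} (hS : Ideal.span (S : Set R) = I.1) :
    Gmap v I = ⨅ g ∈ S, v g := by
  refine le_antisymm ?_ ?_
  · exact le_iInf₂ fun g hg => iInf₂_le g (hS ▸ Ideal.subset_span hg)
  · exact le_iInf₂ fun f hf => semival_le_of_mem_span hv S (hS ▸ hf)

lemma isTropChar_Gmap {v : R → ENNReal} (hv : IsSemival v) :
    IsTropChar (Gmap v) := by
  obtain ⟨hmul, hadd, hone, hzero⟩ := hv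
  have hGle : ∀ (I : fgIdeals R) {f : R}, f ∈ I.1 → Gmap v I ≤ v f :=
    fun I f hf => iInf₂_le f hf
  refine ⟨fun I J => ?_, fun I J => ?_, ?_, ?_⟩
  · -- multiplicativity
    refine le_antisymm ?_ ?_
    · -- Gmap v (I*J) ≤ Gmap v I + Gmap v J
      have hI : Gmap v I = ⨅ x : I.1, v x := by
        rw [Gmap, iInf_subtype']
      have hJ : Gmap v J = ⨅ x : J.1, v x := by
        rw [Gmap, iInf_subtype']
      rw [hI, hJ, ENNReal.iInf_add]
      refine le_iInf fun x => ?_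
      rw [ENNReal.add_iInf]
      refine le_iInf fun y => ?_
      have hxy : (x : R) * (y : R) ∈ (I * J).1 := Ideal.mul_mem_mul x.2 y.2
      calc Gmap v (I * J) ≤ v ((x : R) * y) := hGle _ hxy
        _ = v x + v y := hmul _ _
    · -- Gmap v I + Gmap v J ≤ Gmap v (I*J)
      refine le_iInf₂ fun h hh => ?_
      have hh' : h ∈ I.1 * J.1 := hh
      refine Submodule.mul_induction_on hh' ?_ ?_
      · intro m hm n hn
        rw [hmul]
        exact add_le_add (hGle I hm) (hGle J hn)
      · intro x y hx hy
        exact le_trans (le_min hx hy) (hadd x y)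
  · -- additivity
    refine le_antisymm ?_ ?_
    · refine le_min ?_ ?_
      · exact le_iInf₂ fun f hf =>
          iInf₂_le f (show f ∈ (I + J).1 from Submodule.mem_sup_left hf)
      · exact le_iInf₂ fun f hf =>
          iInf₂_le f (show f ∈ (I + J).1 from Submodule.mem_sup_right hf)
    · refine le_iInf₂ fun h hh => ?_
      have hh' : h ∈ I.1 ⊔ J.1 := hh
      obtain ⟨x, hx, y, hy, rfl⟩ := Submodule.mem_sup.1 hh'
      exact le_trans (min_le_min (hGle I hx) (hGle J hy)) (hadd x y)
  · -- one
    have h1 : Gmap v 1 ≤ v 1 := hGle 1 (by simp [Ideal.one_eq_top])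
    rw [hone] at h1
    exact le_antisymm h1 zero_le
  · -- zero
    refine le_antisymm le_top (le_iInf₂ fun f hf => ?_)
    have : f = 0 := by simpa using hf
    rw [this, hzero]

lemma tropChar_span_finset {χ : fgIdeals R → ENNReal} (hχ : IsTropChar χ)
    (S : Finset R) :
    χ (sp S) = ⨅ g ∈ S, χ (sg g) := by
  classical
  induction S using Finset.induction_on with
  | empty =>
      have h0 : sp (∅ : Finset R) = 0 := Subtype.ext (by
        show Ideal.span _ = (0 : Ideal R)
        simp)
      rw [h0, hχ.2.2.2]
      simp
  | @insert a S ha ih =>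
      have hsplit : sp (insert a S) = sg a + sp S :=
        Subtype.ext (by
          show Ideal.span _ = Ideal.span {a} ⊔ Ideal.span (S : Set R)
          rw [Finset.coe_insert]
          exact Submodule.span_insert a (S : Set R))
      rw [hsplit, hχ.2.1, ih]
      exact (Finset.iInf_insert a S (fun g => χ (sg g))).symm

lemma Gmap_Fmap {χ : fgIdeals R → ENNReal} (hχ : IsTropChar χ) :
    Gmap (Fmap χ) = χ := by
  funext I
  obtain ⟨S, hS⟩ := (I.2 : I.1.FG)
  have hv := isSemival_Fmap hχ
  rw [Gmap_span_finset hv hS]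
  have hsp := tropChar_span_finset hχ S
  have hIS : sp S = I := Subtype.ext hS
  rw [hIS] at hsp
  simpa [Fmap] using hsp.symm

lemma Fmap_Gmap {v : R → ENNReal} (hv : IsSemival v) :
    Fmap (Gmap v) = v := by
  obtain ⟨hmul, hadd, hone, hzero⟩ := hv
  funext a
  refine le_antisymm (iInf₂_le a (Ideal.mem_span_singleton_self a)) ?_
  refine le_iInf₂ fun f hf => ?_
  obtain ⟨c, rfl⟩ := Ideal.mem_span_singleton.1 hf
  rw [hmul]
  exact le_self_add

end Aux

lemma continuous_finset_biInf {X : Type*} {R : Type*} [TopologicalSpace X] (S : Finset R)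
    (F : R → X → ENNReal) (hF : ∀ g, Continuous (F g)) :
    Continuous fun x => ⨅ g ∈ S, F g x := by
  classical
  induction S using Finset.induction_on with
  | empty => simpa using continuous_const (y := (⊤ : ENNReal))
  | @insert a S ha ih =>
      have : (fun x => ⨅ g ∈ insert a S, F g x)
          = fun x => min (F a x) (⨅ g ∈ S, F g x) := by
        funext x
        exact Finset.iInf_insert a S (fun g => F g x)
      rw [this]
      exact (hF a).min ih

/-- The map sending a tropical character `χ` on the semiring `𝒮(R)` of finitely
generated ideals of `R` to the function `a ↦ χ(aR)` is a homeomorphism onto the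
space of semivaluations on `R` (both spaces with the topology of pointwise
convergence), with inverse sending a semivaluation `v` to `I ↦ inf_{f ∈ I} v f`. -/
theorem tropicalSpectrum_fgIdeals_homeo_semivaluations (R : Type*) [CommRing R] :
    ∃ h : {χ : fgIdeals R → ENNReal // IsTropChar χ} ≃ₜ
          {v : R → ENNReal // IsSemival v},
      (∀ χ (a : R),
        (h χ).1 a = χ.1 ⟨Ideal.span {a}, Submodule.fg_span (Set.finite_singleton a)⟩) ∧
      (∀ v (I : fgIdeals R), (h.symm v).1 I = ⨅ f ∈ (I.1 : Ideal R), v.1 f) := by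
  classical
  have hchoice : ∀ I : fgIdeals R, ∃ S : Finset R, Ideal.span (S : Set R) = I.1 :=
    fun I => I.2
  choose gen hgen using hchoice
  refine ⟨{ toFun := fun χ => ⟨Fmap χ.1, isSemival_Fmap χ.2⟩,
            invFun := fun v => ⟨Gmap v.1, isTropChar_Gmap v.2⟩,
            left_inv := fun χ => Subtype.ext (Gmap_Fmap χ.2),
            right_inv := fun v => Subtype.ext (Fmap_Gmap v.2),
            continuous_toFun := ?_,
            continuous_invFun := ?_ }, fun χ a => rfl, fun v I => rfl⟩
  · apply Continuous.subtype_mk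
    apply continuous_pi
    intro a
    exact (continuous_apply (sg a)).comp continuous_subtype_val
  · apply Continuous.subtype_mk
    apply continuous_pi
    intro I
    have hEq : (fun v : {v : R → ENNReal // IsSemival v} => Gmap v.1 I)
        = fun v => ⨅ g ∈ gen I, v.1 g := by
      funext v
      exact Gmap_span_finset v.2 (hgen I)
    show Continuous fun v : {v : R → ENNReal // IsSemival v} => Gmap v.1 I
    rw [hEq]
    exact continuous_finset_biInf (gen I)
      (fun g (v : {v : R → ENNReal // IsSemival v}) => v.1 g)
      (fun g => (continuous_apply g).comp continuous_subtype_val)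
end

section
/- Let R be a commutative Noetherian ring and let χ : Ideal(R) → [0,+∞] be a tropical character on the semiring of ideals of R. Set I_s := Σ{J : χ(J) = +∞} (the supremum of all ideals on which χ is infinite) and I_c := Σ{J : χ(J) > 0} (the supremum of all ideals on which χ is positive). Then χ(I_s) = +∞ and χ(I_c) > 0; every ideal J with χ(J) = +∞ satisfies J ⊆ I_s and every ideal J with χ(J) > 0 satisfies J ⊆ I_c; I_s ⊆ I_c; and both I_s and I_c are prime ideals of R. -/
/-- In a Noetherian ring, the supremum of a nonempty family of ideals closed
under pairwise suprema belongs to the family. -/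
lemma sSup_mem_of_sup_closed {R : Type*} [CommRing R] [IsNoetherianRing R]
    (S : Set (Ideal R)) (hne : S.Nonempty)
    (hcl : ∀ a ∈ S, ∀ b ∈ S, a ⊔ b ∈ S) : sSup S ∈ S := by
  obtain ⟨M, hM, hmax⟩ :=
    (set_has_maximal_iff_noetherian.mpr inferInstance) S hne
  have hMS : sSup S = M := by
    refine le_antisymm (sSup_le fun J hJ => ?_) (le_sSup hM)
    have h := hmax _ (hcl J hJ M hM)
    rcases lt_or_eq_of_le (le_sup_right : M ≤ J ⊔ M) with h' | h'
    · exact absurd h' h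
    · exact le_trans le_sup_left h'.symm.le
  rw [hMS]; exact hM

/-- Support and center of a semivaluation on a Noetherian ring.  For a tropical
character `χ` on the semiring of ideals of a commutative Noetherian ring `R`,
the ideals `I_s := Σ {J : χ J = ∞}` and `I_c := Σ {J : χ J > 0}` satisfy
`χ I_s = ∞`, `χ I_c > 0`, they are maximal with these properties, `I_s ⊆ I_c`,
and both are prime ideals. -/
theorem support_and_center_prime (R : Type*) [CommRing R] [IsNoetherianRing R]
    (χ : Ideal R → ENNReal) (hχ : IsTropChar χ) :
    χ (sSup {J : Ideal R | χ J = ⊤}) = ⊤ ∧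
    0 < χ (sSup {J : Ideal R | 0 < χ J}) ∧
    (∀ J : Ideal R, χ J = ⊤ → J ≤ sSup {J : Ideal R | χ J = ⊤}) ∧
    (∀ J : Ideal R, 0 < χ J → J ≤ sSup {J : Ideal R | 0 < χ J}) ∧
    sSup {J : Ideal R | χ J = ⊤} ≤ sSup {J : Ideal R | 0 < χ J} ∧
    (sSup {J : Ideal R | χ J = ⊤}).IsPrime ∧
    (sSup {J : Ideal R | 0 < χ J}).IsPrime := by
  obtain ⟨hmul, hadd, hone, hzero⟩ := hχ
  -- antitonicity
  have hanti : ∀ {I J : Ideal R}, I ≤ J → χ J ≤ χ I := by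
    intro I J h
    have : χ J = min (χ I) (χ J) := by
      rw [← hadd]; rw [Submodule.add_eq_sup, sup_eq_right.mpr h]
    rw [this]; exact min_le_left _ _
  have hsup : ∀ I J : Ideal R, χ (I ⊔ J) = min (χ I) (χ J) := by
    intro I J; rw [← Submodule.add_eq_sup]; exact hadd I J
  -- support set
  set Ss := {J : Ideal R | χ J = ⊤} with hSs
  set Sc := {J : Ideal R | 0 < χ J} with hSc
  have hsMem : sSup Ss ∈ Ss := by
    apply sSup_mem_of_sup_closed _ ⟨0, hzero⟩
    intro a ha b hb
    simp only [hSs, Set.mem_setOf_eq] at *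
    rw [hsup, ha, hb]; simp
  have hcMem : sSup Sc ∈ Sc := by
    apply sSup_mem_of_sup_closed _ ⟨0, show (0:ENNReal) < χ 0 by
      rw [hzero]; exact ENNReal.zero_lt_top⟩
    intro a ha b hb
    simp only [hSc, Set.mem_setOf_eq] at *
    rw [hsup]; exact lt_min ha hb
  have hs : χ (sSup Ss) = ⊤ := hsMem
  have hc : 0 < χ (sSup Sc) := hcMem
  have h5 : sSup Ss ≤ sSup Sc := sSup_le_sSup fun J hJ => by
    have hJ' : χ J = ⊤ := hJ
    show 0 < χ J
    rw [hJ']; exact ENNReal.zero_lt_top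
  refine ⟨hs, hc, fun J hJ => le_sSup hJ, fun J hJ => le_sSup hJ, h5, ?_, ?_⟩
  · -- support prime
    rw [Ideal.isPrime_iff]
    constructor
    · intro h
      rw [h, ← Ideal.one_eq_top, hone] at hs
      exact ENNReal.zero_ne_top hs
    · intro x y hxy
      by_contra hcon
      push_neg at hcon
      obtain ⟨hx, hy⟩ := hcon
      set M := sSup Ss
      have hA : χ (M ⊔ Ideal.span {x}) ≠ ⊤ := by
        intro h
        exact hx ((Ideal.span_singleton_le_iff_mem M).mp
          (le_trans le_sup_right (le_sSup h)))
      have hB : χ (M ⊔ Ideal.span {y}) ≠ ⊤ := by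
        intro h
        exact hy ((Ideal.span_singleton_le_iff_mem M).mp
          (le_trans le_sup_right (le_sSup h)))
      have hprod : (M ⊔ Ideal.span {x}) * (M ⊔ Ideal.span {y}) ≤ M := by
        rw [Ideal.sup_mul, Ideal.mul_sup, Ideal.mul_sup]
        refine sup_le (sup_le Ideal.mul_le_right Ideal.mul_le_left)
          (sup_le Ideal.mul_le_right ?_)
        rw [Ideal.span_singleton_mul_span_singleton]
        exact (Ideal.span_singleton_le_iff_mem M).mpr hxy
      have := hanti hprod
      rw [hmul, hs] at this
      exact (ENNReal.add_lt_top.mpr ⟨hA.lt_top, hB.lt_top⟩).ne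
        (top_le_iff.mp this)
  · -- center prime
    rw [Ideal.isPrime_iff]
    constructor
    · intro h
      rw [h, ← Ideal.one_eq_top, hone] at hc
      exact lt_irrefl _ hc
    · intro x y hxy
      by_contra hcon
      push_neg at hcon
      obtain ⟨hx, hy⟩ := hcon
      set M := sSup Sc
      have hA : χ (M ⊔ Ideal.span {x}) = 0 := by
        by_contra h
        exact hx ((Ideal.span_singleton_le_iff_mem M).mp
          (le_trans le_sup_right (le_sSup (pos_iff_ne_zero.mpr h))))
      have hB : χ (M ⊔ Ideal.span {y}) = 0 := by
        by_contra h
        exact hy ((Ideal.span_singleton_le_iff_mem M).mp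
          (le_trans le_sup_right (le_sSup (pos_iff_ne_zero.mpr h))))
      have hprod : (M ⊔ Ideal.span {x}) * (M ⊔ Ideal.span {y}) ≤ M := by
        rw [Ideal.sup_mul, Ideal.mul_sup, Ideal.mul_sup]
        refine sup_le (sup_le Ideal.mul_le_right Ideal.mul_le_left)
          (sup_le Ideal.mul_le_right ?_)
        rw [Ideal.span_singleton_mul_span_singleton]
        exact (Ideal.span_singleton_le_iff_mem M).mpr hxy
      have := hanti hprod
      rw [hmul, hA, hB, add_zero] at this
      exact (lt_irrefl _ (lt_of_lt_of_le hc this)).elim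
end

section
/- Let (R, m) be a commutative Noetherian local ring with maximal ideal m, and let χ, χ' : Ideal(R) → [0,+∞] be tropical characters on the semiring of ideals of R such that χ(m) > 0 and χ'(m) > 0. If χ(I) = χ'(I) for every ideal I of R that contains some power m^k (k ≥ 1) of the maximal ideal, then χ = χ', i.e. χ(J) = χ'(J) for every ideal J. -/
/-! Adding `m ^ k` truncates `χ J` at `k * χ m`; when `χ m > 0` the truncation level tends to `∞`,
so `χ J` is the limit of the values of `χ` on the `m`-primary ideals `J + m ^ k`. -/

open Filter Topology

theorem ENNReal.tendsto_min_nat_mul_atTop (a : ENNReal) {c : ENNReal} (hc : c ≠ 0) :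
    Tendsto (fun k : ℕ => min a (k * c)) atTop (𝓝 a) := by
  have hkc : Tendsto (fun k : ℕ => (k : ENNReal) * c) atTop (𝓝 ⊤) :=
    ENNReal.Tendsto.mul_const ENNReal.tendsto_nat_nhds_top (Or.inl ENNReal.top_ne_zero)
      |>.trans (by rw [ENNReal.top_mul hc])
  simpa using tendsto_const_nhds.min hkc

namespace IsTropChar

variable {S : Type*} [CommSemiring S] {χ : S → ENNReal}

theorem map_pow (hχ : IsTropChar χ) (a : S) (k : ℕ) : χ (a ^ k) = k * χ a := by
  induction k with
  | zero => simpa using hχ.2.2.1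
  | succ n ih =>
    rw [pow_succ, hχ.1, ih]
    push_cast
    ring

theorem map_add_pow (hχ : IsTropChar χ) (a b : S) (k : ℕ) :
    χ (a + b ^ k) = min (χ a) (k * χ b) := by
  rw [hχ.2.1, hχ.map_pow]

theorem tendsto_map_add_pow (hχ : IsTropChar χ) (a : S) {b : S} (hb : 0 < χ b) :
    Tendsto (fun k : ℕ => χ (a + b ^ k)) atTop (𝓝 (χ a)) := by
  simpa only [hχ.map_add_pow] using ENNReal.tendsto_min_nat_mul_atTop (χ a) hb.ne'

end IsTropChar

theorem tropChar_centered_determined_by_primary_ideals_general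
    (R : Type*) [CommRing R] [IsLocalRing R]
    (χ χ' : Ideal R → ENNReal) (hχ : IsTropChar χ) (hχ' : IsTropChar χ')
    (hm : 0 < χ (IsLocalRing.maximalIdeal R))
    (hm' : 0 < χ' (IsLocalRing.maximalIdeal R))
    (h : ∀ I : Ideal R,
      (∃ k : ℕ, 1 ≤ k ∧ (IsLocalRing.maximalIdeal R) ^ k ≤ I) → χ I = χ' I) :
    ∀ J : Ideal R, χ J = χ' J := by
  intro J
  refine tendsto_nhds_unique (hχ.tendsto_map_add_pow J hm) ?_
  refine (hχ'.tendsto_map_add_pow J hm').congr' ?_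
  filter_upwards [eventually_ge_atTop 1] with k hk
  exact (h _ ⟨k, hk, le_sup_right⟩).symm

/-- Two tropical characters on the ideals of a Noetherian local ring `(R, m)`,
both centered at the closed point (i.e. positive on `m`), which agree on all
ideals containing a power `m^k` (`k ≥ 1`) of the maximal ideal, are equal. -/
theorem tropChar_centered_determined_by_primary_ideals
    (R : Type*) [CommRing R] [IsNoetherianRing R] [IsLocalRing R]
    (χ χ' : Ideal R → ENNReal) (hχ : IsTropChar χ) (hχ' : IsTropChar χ')
    (hm : 0 < χ (IsLocalRing.maximalIdeal R))
    (hm' : 0 < χ' (IsLocalRing.maximalIdeal R))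
    (h : ∀ I : Ideal R,
      (∃ k : ℕ, 1 ≤ k ∧ (IsLocalRing.maximalIdeal R) ^ k ≤ I) → χ I = χ' I) :
    ∀ J : Ideal R, χ J = χ' J :=
  tropChar_centered_determined_by_primary_ideals_general R χ χ' hχ hχ' hm hm' h
end

section
/- Let K be a compact Hausdorff topological space and let A ⊆ C(K,ℝ) be a dense ℝ-linear subspace that contains the constant functions and is stable under pointwise maximum. Then for every ℝ-linear map φ : A → ℝ with φ(max(f,g)) = max(φ(f), φ(g)) for all f, g ∈ A and φ ≠ 0, one has φ(1) > 0 and there exists a unique point x ∈ K such that φ(f) = φ(1)·f(x) for every f ∈ A. -/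
/-- Let `K` be compact Hausdorff and `A ⊆ C(K,ℝ)` a dense linear subspace containing
the constants and stable under pointwise maximum.  Then every nonzero linear
functional `φ : A → ℝ` commuting with `max` satisfies `φ 1 > 0` and is a positive
multiple of a unique point evaluation: there is a unique `x ∈ K` with
`φ f = φ 1 · f x` for all `f ∈ A`. -/
theorem maxLinear_functional_is_point_evaluation
    (K : Type*) [TopologicalSpace K] [CompactSpace K] [T2Space K]
    (A : Submodule ℝ C(K, ℝ))
    (hdense : Dense (A : Set C(K, ℝ)))
    (hconst : ∀ c : ℝ, (ContinuousMap.const K c) ∈ A)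
    (hsup : ∀ f g : C(K, ℝ), f ∈ A → g ∈ A → f ⊔ g ∈ A)
    (φ : A →ₗ[ℝ] ℝ)
    (hφ : ∀ (f g : C(K, ℝ)) (hf : f ∈ A) (hg : g ∈ A),
      φ ⟨f ⊔ g, hsup f g hf hg⟩ = max (φ ⟨f, hf⟩) (φ ⟨g, hg⟩))
    (hφne : φ ≠ 0) :
    0 < φ ⟨ContinuousMap.const K 1, hconst 1⟩ ∧
    ∃! x : K, ∀ (f : C(K, ℝ)) (hf : f ∈ A),
      φ ⟨f, hf⟩ = φ ⟨ContinuousMap.const K 1, hconst 1⟩ * f x := by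
  classical
  have hK : Nonempty K := by
    by_contra h
    apply hφne
    ext a
    have ha : a = 0 := Subtype.ext (ContinuousMap.ext fun x => absurd ⟨x⟩ h)
    simp [ha]
  set φ1 : ℝ := φ ⟨ContinuousMap.const K 1, hconst 1⟩ with hφ1def
  -- φ of constants
  have hφconst : ∀ c : ℝ, φ ⟨ContinuousMap.const K c, hconst c⟩ = c * φ1 := by
    intro c
    have h1 : (⟨ContinuousMap.const K c, hconst c⟩ : A)
        = c • ⟨ContinuousMap.const K 1, hconst 1⟩ := by
      apply Subtype.ext
      ext x
      simp
    rw [h1, map_smul, smul_eq_mul]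
  -- monotonicity
  have hmono : ∀ (f g : C(K, ℝ)) (hf : f ∈ A) (hg : g ∈ A), f ≤ g →
      φ ⟨f, hf⟩ ≤ φ ⟨g, hg⟩ := by
    intro f g hf hg hle
    have h := hφ f g hf hg
    have heq : (⟨f ⊔ g, hsup f g hf hg⟩ : A) = ⟨g, hg⟩ :=
      Subtype.ext (sup_eq_right.mpr hle)
    rw [heq] at h
    rw [h]
    exact le_max_left _ _
  -- negation inside A
  have hneg : ∀ (f : C(K, ℝ)) (hf : f ∈ A),
      φ ⟨-f, A.neg_mem hf⟩ = -φ ⟨f, hf⟩ := by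
    intro f hf
    have : (⟨-f, A.neg_mem hf⟩ : A) = -⟨f, hf⟩ := Subtype.ext (by simp)
    rw [this, map_neg]
  -- bound
  have hbound : ∀ (f : C(K, ℝ)) (hf : f ∈ A), φ ⟨f, hf⟩ ≤ ‖f‖ * φ1 := by
    intro f hf
    have hle : f ≤ ContinuousMap.const K ‖f‖ := by
      rw [ContinuousMap.le_def]
      intro x
      simpa using (le_abs_self (f x)).trans (f.norm_coe_le_norm x)
    calc φ ⟨f, hf⟩ ≤ φ ⟨ContinuousMap.const K ‖f‖, hconst _⟩ :=
          hmono _ _ _ _ hle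
      _ = ‖f‖ * φ1 := hφconst _
  -- positivity of φ1
  have hφ1nonneg : 0 ≤ φ1 := by
    have h0 : φ ⟨(0 : C(K, ℝ)), A.zero_mem⟩ = 0 := by
      have : (⟨(0 : C(K, ℝ)), A.zero_mem⟩ : A) = 0 := rfl
      rw [this, map_zero]
    have := hmono 0 (ContinuousMap.const K 1) A.zero_mem (hconst 1)
      (by rw [ContinuousMap.le_def]; intro x; simp)
    rw [h0] at this
    exact this
  have hφ1pos : 0 < φ1 := by
    rcases lt_or_eq_of_le hφ1nonneg with h | h
    · exact h
    · exfalso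
      apply hφne
      ext a
      obtain ⟨f, hf⟩ := a
      have h1 : φ ⟨f, hf⟩ ≤ 0 := by
        have := hbound f hf; rw [← h] at this; simpa using this
      have h2 : -φ ⟨f, hf⟩ ≤ 0 := by
        have := hbound (-f) (A.neg_mem hf)
        rw [← h, hneg f hf] at this; simpa using this
      have : φ ⟨f, hf⟩ = 0 := le_antisymm h1 (by linarith)
      simpa using this
  have hφ1ne : φ1 ≠ 0 := ne_of_gt hφ1pos
  -- inf structure
  have hinf_eq : ∀ f g : C(K, ℝ), f ⊓ g = -((-f) ⊔ (-g)) := by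
    intro f g
    ext x
    simp [max_neg_neg]
  have hinfmem : ∀ (f g : C(K, ℝ)), f ∈ A → g ∈ A → f ⊓ g ∈ A := by
    intro f g hf hg
    rw [hinf_eq]
    exact A.neg_mem (hsup _ _ (A.neg_mem hf) (A.neg_mem hg))
  have hφinf : ∀ (f g : C(K, ℝ)) (hf : f ∈ A) (hg : g ∈ A),
      φ ⟨f ⊓ g, hinfmem f g hf hg⟩ = min (φ ⟨f, hf⟩) (φ ⟨g, hg⟩) := by
    intro f g hf hg
    have h1 : (⟨f ⊓ g, hinfmem f g hf hg⟩ : A)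
        = -⟨(-f) ⊔ (-g), hsup _ _ (A.neg_mem hf) (A.neg_mem hg)⟩ :=
      Subtype.ext (by simpa using hinf_eq f g)
    rw [h1, map_neg, hφ (-f) (-g) (A.neg_mem hf) (A.neg_mem hg),
      hneg f hf, hneg g hg, max_neg_neg, neg_neg]
  -- existence of a dominating point
  have hx : ∃ x : K, ∀ (f : C(K, ℝ)) (hf : f ∈ A), φ ⟨f, hf⟩ ≤ φ1 * f x := by
    by_contra hcon
    push_neg at hcon
    -- for each x choose f ∈ A with φ1 * f x < φ f
    choose F hF hFlt using hcon
    -- normalize: g x ∈ A, φ (g x) = 0, g x x < 0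
    set G : K → C(K, ℝ) := fun x =>
      F x - ContinuousMap.const K (φ ⟨F x, hF x⟩ / φ1) with hGdef
    have hGmem : ∀ x, G x ∈ A := fun x => A.sub_mem (hF x) (hconst _)
    have hGφ : ∀ x, φ ⟨G x, hGmem x⟩ = 0 := by
      intro x
      have h1 : (⟨G x, hGmem x⟩ : A)
          = ⟨F x, hF x⟩ - ⟨ContinuousMap.const K (φ ⟨F x, hF x⟩ / φ1), hconst _⟩ :=
        Subtype.ext rfl
      rw [h1, map_sub, hφconst, div_mul_cancel₀ _ hφ1ne, sub_self]
    have hGneg : ∀ x, G x x < 0 := by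
      intro x
      have h := hFlt x
      have : F x x < φ ⟨F x, hF x⟩ / φ1 := by
        rw [lt_div_iff₀ hφ1pos]
        linarith [h]
      simpa [hGdef, sub_neg] using this
    -- open cover
    have hcover : (Set.univ : Set K) ⊆ ⋃ x ∈ (Set.univ : Set K), {y | G x y < 0} := by
      intro y _
      exact Set.mem_biUnion (Set.mem_univ y) (hGneg y)
    obtain ⟨t, ht⟩ := isCompact_univ.elim_finite_subcover_image
      (fun x _ => isOpen_lt (G x).continuous continuous_const) hcover
    obtain ⟨htsub, htfin, htcover⟩ := ht
    -- finite inf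
    have key : ∀ s : Finset K, ∃ (g : C(K, ℝ)) (hg : g ∈ A),
        φ ⟨g, hg⟩ = 0 ∧ ∀ x ∈ s, g ≤ G x := by
      intro s
      induction s using Finset.induction_on with
      | empty => exact ⟨0, A.zero_mem, by simp [show (⟨(0:C(K,ℝ)), A.zero_mem⟩ : A) = 0 from rfl],
          by simp⟩
      | insert _ _ hnotmem ih =>
        rename_i a s
        obtain ⟨g, hg, hgφ, hgle⟩ := ih
        refine ⟨G a ⊓ g, hinfmem _ _ (hGmem a) hg, ?_, ?_⟩
        · rw [hφinf _ _ (hGmem a) hg, hGφ a, hgφ, min_self]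
        · intro x hx
          rcases Finset.mem_insert.mp hx with h | h
          · subst h; exact inf_le_left
          · exact le_trans inf_le_right (hgle x h)
    obtain ⟨g, hg, hgφ, hgle⟩ := key htfin.toFinset
    -- g < 0 everywhere
    have hgneg : ∀ y, g y < 0 := by
      intro y
      have := htcover (Set.mem_univ y)
      simp only [Set.mem_iUnion] at this
      obtain ⟨x, hxt, hxy⟩ := this
      have hle : g ≤ G x := hgle x (by simpa using hxt)
      exact lt_of_le_of_lt (ContinuousMap.le_def.mp hle y) hxy
    -- max attained
    obtain ⟨z, -, hz⟩ := isCompact_univ.exists_isMaxOn Set.univ_nonempty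
      g.continuous.continuousOn
    have hgle' : g ≤ ContinuousMap.const K (g z) := by
      rw [ContinuousMap.le_def]; intro y; exact hz (Set.mem_univ y)
    have : φ ⟨g, hg⟩ ≤ g z * φ1 := by
      calc φ ⟨g, hg⟩ ≤ φ ⟨ContinuousMap.const K (g z), hconst _⟩ := hmono _ _ _ _ hgle'
        _ = g z * φ1 := hφconst _
    rw [hgφ] at this
    have : g z * φ1 < 0 := mul_neg_of_neg_of_pos (hgneg z) hφ1pos
    linarith
  obtain ⟨x, hxle⟩ := hx
  -- equality at x
  have hxeq : ∀ (f : C(K, ℝ)) (hf : f ∈ A), φ ⟨f, hf⟩ = φ1 * f x := by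
    intro f hf
    have h1 := hxle f hf
    have h2 := hxle (-f) (A.neg_mem hf)
    rw [hneg f hf] at h2
    simp only [ContinuousMap.neg_apply] at h2
    have : φ1 * f x ≤ φ ⟨f, hf⟩ := by nlinarith
    linarith
  refine ⟨hφ1pos, x, hxeq, ?_⟩
  -- uniqueness
  intro y hy
  have hAeq : ∀ f : C(K, ℝ), f ∈ A → f y = f x := by
    intro f hf
    have h1 := hy f hf
    have h2 := hxeq f hf
    have : φ1 * f y = φ1 * f x := by rw [← h1, h2]
    exact mul_left_cancel₀ hφ1ne this
  have hAll : ∀ f : C(K, ℝ), f y = f x := by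
    have hclosed : IsClosed {f : C(K, ℝ) | f y = f x} :=
      isClosed_eq (continuous_eval_const y)
        (continuous_eval_const x)
    have hsub : (A : Set C(K, ℝ)) ⊆ {f : C(K, ℝ) | f y = f x} :=
      fun f hf => hAeq f hf
    intro f
    exact hclosed.closure_subset_iff.mpr hsub (hdense f)
  by_contra hxy
  obtain ⟨f, hf0, hf1, -⟩ := exists_continuous_zero_one_of_isClosed
    (isClosed_singleton (x := y)) (isClosed_singleton (x := x))
    (Set.disjoint_singleton.mpr hxy)
  have h0 : f y = 0 := hf0 rfl
  have h1 : f x = 1 := hf1 rfl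
  rw [hAll f, h1] at h0
  exact one_ne_zero h0
end

section
/- Let K be a compact Hausdorff topological space and let A ⊆ C(K,ℝ) be a dense ℝ-linear subspace that contains the constant functions and is stable under pointwise maximum. The evaluation map sending x ∈ K to the functional δ_x : A → ℝ, δ_x(f) = f(x), is a homeomorphism from K onto the set of ℝ-linear functionals φ : A → ℝ satisfying φ(max(f,g)) = max(φ(f), φ(g)) for all f, g ∈ A and φ(1) = 1, where this set of functionals is equipped with the topology of pointwise convergence on A. -/
/-!
A tropical character `φ` is monotone (because `f ≤ g` means `f ⊔ g = g`) and satisfies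
`φ |f| = |φ f|`, hence `φ c = c` on constants and `min f ≤ φ f` on the compact space `K`.
For finitely many `f ∈ A` the function `∑ |f - φ f|` lies in `A`, is nonnegative and is killed
by `φ`, so it vanishes somewhere: the closed sets `{x | f x = φ f}` have the finite intersection
property and compactness yields a point `x` with `φ = δ_x`. Injectivity of `x ↦ δ_x` comes from
density of `A` and Urysohn's lemma, and a continuous bijection from a compact space onto a
Hausdorff space is a homeomorphism.
-/

section

variable {K : Type*} [TopologicalSpace K]

theorem eq_of_dense_of_forall_apply_eq [T35Space K] {A : Set C(K, ℝ)} (hA : Dense A)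
    {x y : K} (hxy : ∀ f ∈ A, f x = f y) : x = y := by
  by_contra hne
  obtain ⟨g, hg, hgxy⟩ := separatesPoints_continuous_of_t35Space hne
  have hclosed : IsClosed {f : C(K, ℝ) | f x = f y} :=
    isClosed_eq (continuous_eval_const x) (continuous_eval_const y)
  exact hgxy <|
    closure_minimal hxy hclosed (hA.closure_eq ▸ Set.mem_univ (⟨g, hg⟩ : C(K, ℝ)))

structure IsTropicalCharacter {A : Submodule ℝ C(K, ℝ)} (φ : A →ₗ[ℝ] ℝ) : Prop where
  map_sup : ∀ f g h : A, (h : C(K, ℝ)) = (f : C(K, ℝ)) ⊔ g → φ h = max (φ f) (φ g)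
  map_one : ∀ u : A, (u : C(K, ℝ)) = 1 → φ u = 1

namespace IsTropicalCharacter

variable {A : Submodule ℝ C(K, ℝ)} {φ : A →ₗ[ℝ] ℝ}

theorem map_le_map (hφ : IsTropicalCharacter φ) {f g : A} (hfg : (f : C(K, ℝ)) ≤ g) :
    φ f ≤ φ g :=
  hφ.map_sup f g g (sup_eq_right.mpr hfg).symm ▸ le_max_left _ _

theorem map_abs (hφ : IsTropicalCharacter φ) {f h : A}
    (hh : (h : C(K, ℝ)) = |(f : C(K, ℝ))|) : φ h = |φ f| := by
  rw [hφ.map_sup f (-f) h hh, map_neg, abs_eq_max_neg]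

theorem nonempty (hφ : IsTropicalCharacter φ) : Nonempty K := by
  by_contra hK
  have : (0 : C(K, ℝ)) = 1 := by
    ext x
    exact absurd ⟨x⟩ hK
  simpa using hφ.map_one 0 this

theorem map_smul_one (hφ : IsTropicalCharacter φ) {u : A} (hu : (u : C(K, ℝ)) = 1) (c : ℝ) :
    φ (c • u) = c := by
  rw [map_smul, hφ.map_one u hu, smul_eq_mul, mul_one]

theorem exists_apply_le [CompactSpace K] (hφ : IsTropicalCharacter φ) (h1 : (1 : C(K, ℝ)) ∈ A)
    (f : A) : ∃ x, (f : C(K, ℝ)) x ≤ φ f := by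
  have := hφ.nonempty
  obtain ⟨x, -, hx⟩ := isCompact_univ.exists_isMinOn Set.univ_nonempty
    (f : C(K, ℝ)).continuous.continuousOn
  refine ⟨x, hφ.map_smul_one (u := ⟨1, h1⟩) rfl ((f : C(K, ℝ)) x) ▸ hφ.map_le_map ?_⟩
  intro y
  simpa using hx (Set.mem_univ y)

theorem exists_forall_mem_apply_eq [CompactSpace K] (hφ : IsTropicalCharacter φ)
    (h1 : (1 : C(K, ℝ)) ∈ A) (hsup : ∀ f g : C(K, ℝ), f ∈ A → g ∈ A → f ⊔ g ∈ A)
    (t : Finset A) : ∃ x, ∀ f ∈ t, (f : C(K, ℝ)) x = φ f := by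
  let u : A := ⟨1, h1⟩
  let dev (f : A) : A :=
    ⟨|((f - φ f • u : A) : C(K, ℝ))|, hsup _ _ (SetLike.coe_mem _) (neg_mem (SetLike.coe_mem _))⟩
  have hdev_apply (f : A) (x : K) : (dev f : C(K, ℝ)) x = |(f : C(K, ℝ)) x - φ f| := by
    simp [dev, u]
  have hφdev (f : A) : φ (dev f) = 0 := by
    rw [hφ.map_abs rfl, map_sub, hφ.map_smul_one rfl, sub_self, abs_zero]
  obtain ⟨x, hx⟩ := hφ.exists_apply_le h1 (∑ f ∈ t, dev f)
  have hsum : ∑ g ∈ t, |(g : C(K, ℝ)) x - φ g| = 0 := by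
    refine le_antisymm ?_ (Finset.sum_nonneg fun g _ => abs_nonneg _)
    simpa [map_sum, hφdev, hdev_apply] using hx
  refine ⟨x, fun f hf => ?_⟩
  rw [Finset.sum_eq_zero_iff_of_nonneg fun g _ => abs_nonneg _] at hsum
  exact sub_eq_zero.mp (abs_eq_zero.mp (hsum f hf))

theorem exists_forall_apply_eq [CompactSpace K] (hφ : IsTropicalCharacter φ)
    (h1 : (1 : C(K, ℝ)) ∈ A) (hsup : ∀ f g : C(K, ℝ), f ∈ A → g ∈ A → f ⊔ g ∈ A) :
    ∃ x, ∀ f : A, (f : C(K, ℝ)) x = φ f := by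
  have hclosed (f : A) : IsClosed {x | (f : C(K, ℝ)) x = φ f} :=
    isClosed_eq (map_continuous _) continuous_const
  obtain ⟨x, -, hx⟩ := isCompact_univ.inter_iInter_nonempty _ hclosed fun t => by
    obtain ⟨x, hx⟩ := hφ.exists_forall_mem_apply_eq h1 hsup t
    exact ⟨x, trivial, Set.mem_iInter₂.mpr hx⟩
  exact ⟨x, Set.mem_iInter.mp hx⟩

end IsTropicalCharacter

end

/-- Tropical Gelfand transform: for `K` compact Hausdorff and `A ⊆ C(K,ℝ)` a dense
linear subspace containing the constants and stable under pointwise maximum, the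
evaluation map `x ↦ δ_x` is a homeomorphism from `K` onto the space of normalized
tropical characters of `A`, i.e. the ℝ-linear functionals `φ : A → ℝ` commuting
with `max` and with `φ 1 = 1`, equipped with the topology of pointwise
convergence. -/
theorem evaluation_homeomorphism_tropical_characters
    (K : Type*) [TopologicalSpace K] [CompactSpace K] [T2Space K]
    (A : Submodule ℝ C(K, ℝ))
    (hdense : Dense (A : Set C(K, ℝ)))
    (hconst : ∀ c : ℝ, (ContinuousMap.const K c) ∈ A)
    (hsup : ∀ f g : C(K, ℝ), f ∈ A → g ∈ A → f ⊔ g ∈ A) :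
    ∃ h : K ≃ₜ {φ : A → ℝ //
        (∀ f g : A, φ (f + g) = φ f + φ g) ∧
        (∀ (c : ℝ) (f : A), φ (c • f) = c * φ f) ∧
        (∀ (f g : C(K, ℝ)) (hf : f ∈ A) (hg : g ∈ A),
          φ ⟨f ⊔ g, hsup f g hf hg⟩ = max (φ ⟨f, hf⟩) (φ ⟨g, hg⟩)) ∧
        φ ⟨ContinuousMap.const K 1, hconst 1⟩ = 1},
      ∀ (x : K) (f : C(K, ℝ)) (hf : f ∈ A), (h x).1 ⟨f, hf⟩ = f x := by
  refine ⟨Continuous.homeoOfEquivCompactToT2 (f := .ofBijective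
    (fun x => ⟨fun f => (f : C(K, ℝ)) x, fun _ _ => rfl, fun _ _ => rfl, fun _ _ _ _ => rfl, rfl⟩)
    ⟨fun x y hxy => ?_, ?_⟩) ?_, fun _ _ _ => rfl⟩
  · exact eq_of_dense_of_forall_apply_eq hdense fun f hf =>
      congrFun (congrArg Subtype.val hxy) ⟨f, hf⟩
  · rintro ⟨φ, hadd, hsmul, hmax, hone⟩
    have hφ : IsTropicalCharacter (⟨⟨φ, hadd⟩, hsmul⟩ : A →ₗ[ℝ] ℝ) := by
      refine ⟨?_, ?_⟩
      · rintro ⟨f, hf⟩ ⟨g, hg⟩ ⟨_, _⟩ rfl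
        exact hmax f g hf hg
      · rintro ⟨_, _⟩ rfl
        exact hone
    obtain ⟨x, hx⟩ := hφ.exists_forall_apply_eq (hconst 1) hsup
    exact ⟨x, Subtype.ext (funext hx)⟩
  · exact (continuous_pi fun f : A => (f : C(K, ℝ)).continuous).subtype_mk _
end

section
/- Let V be a finite-dimensional real vector space, B : V × V → ℝ a symmetric bilinear form, and (e_1, …, e_n) a basis of V such that B(e_i, e_j) ≥ 0 for all i ≠ j. Suppose there exists a vector v = Σ_i v^i e_i with v^i > 0 for every i and B(v, e_i) = 0 for every i (i.e. v lies in the kernel of B). Then B is negative semi-definite: B(x, x) ≤ 0 for every x ∈ V. -/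
/-- Let `V` be a finite-dimensional real vector space with basis `e₁, …, eₙ`, and
`B` a symmetric bilinear form with `B (e i) (e j) ≥ 0` for `i ≠ j`.  If some
vector `v = Σ cⁱ eᵢ` with all `cⁱ > 0` lies in the kernel of `B`, then `B` is
negative semi-definite. -/
theorem bilinear_form_negative_semidefinite
    (V : Type*) [AddCommGroup V] [Module ℝ V] (n : ℕ)
    (e : Module.Basis (Fin n) ℝ V) (B : V →ₗ[ℝ] V →ₗ[ℝ] ℝ)
    (hsymm : ∀ x y : V, B x y = B y x)
    (hoff : ∀ i j : Fin n, i ≠ j → 0 ≤ B (e i) (e j))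
    (c : Fin n → ℝ) (hc : ∀ i, 0 < c i)
    (hker : ∀ j : Fin n, B (∑ i, c i • e i) (e j) = 0) :
    ∀ x : V, B x x ≤ 0 := by
  intro x
  set a : Fin n → ℝ := fun i => e.repr x i with ha
  have hx : x = ∑ i, a i • e i := (e.sum_repr x).symm
  set b : Fin n → Fin n → ℝ := fun i j => B (e i) (e j) with hb
  have hBxx : B x x = ∑ i, ∑ j, a i * a j * b i j := by
    conv_lhs => rw [hx]
    simp only [map_sum, LinearMap.sum_apply, map_smul, LinearMap.smul_apply, smul_eq_mul]
    refine Finset.sum_congr rfl fun i _ => ?_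
    rw [Finset.mul_sum]
    refine Finset.sum_congr rfl fun j _ => ?_
    simp only [hb]
    rw [hsymm]; ring
  have hker' : ∀ j, ∑ i, c i * b i j = 0 := by
    intro j
    have := hker j
    simpa [map_sum, LinearMap.sum_apply, map_smul, smul_eq_mul] using this
  have hker'' : ∀ i, ∑ j, c j * b i j = 0 := by
    intro i
    have h := hker' i
    calc ∑ j, c j * b i j = ∑ j, c j * b j i := by
          refine Finset.sum_congr rfl fun j _ => ?_
          simp only [hb]; rw [hsymm]
      _ = 0 := h
  have hcne : ∀ i, (c i : ℝ) ≠ 0 := fun i => (hc i).ne'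
  set t : Fin n → ℝ := fun i => a i / c i with ht
  have hat : ∀ i, a i = c i * t i := by
    intro i
    simp only [ht]
    rw [mul_comm, div_mul_cancel₀ _ (hcne i)]
  have e1 : ∑ i, ∑ j, (c i * t i ^ 2 * (c j * b i j)) = 0 := by
    refine Finset.sum_eq_zero fun i _ => ?_
    rw [← Finset.mul_sum, hker'' i, mul_zero]
  have e2 : ∑ i, ∑ j, (c j * t j ^ 2 * (c i * b i j)) = 0 := by
    rw [Finset.sum_comm]
    refine Finset.sum_eq_zero fun j _ => ?_
    calc ∑ i, c j * t j ^ 2 * (c i * b i j) = c j * t j ^ 2 * ∑ i, c i * b i j := by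
          rw [Finset.mul_sum]
      _ = 0 := by rw [hker' j, mul_zero]
  have key : ∀ i j : Fin n, b i j * (c i * c j) * (t i - t j) ^ 2 + 2 * (a i * a j * b i j)
      = c i * t i ^ 2 * (c j * b i j) + c j * t j ^ 2 * (c i * b i j) := by
    intro i j; rw [hat i, hat j]; ring
  have esum : ∑ i, ∑ j, (b i j * (c i * c j) * (t i - t j) ^ 2 + 2 * (a i * a j * b i j))
      = ∑ i, ∑ j, (c i * t i ^ 2 * (c j * b i j) + c j * t j ^ 2 * (c i * b i j)) :=
    Finset.sum_congr rfl fun i _ => Finset.sum_congr rfl fun j _ => key i j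
  simp_rw [Finset.sum_add_distrib] at esum
  rw [e1, e2, add_zero] at esum
  simp_rw [← Finset.mul_sum] at esum
  have hSnonneg : 0 ≤ ∑ i, ∑ j, b i j * (c i * c j) * (t i - t j) ^ 2 := by
    refine Finset.sum_nonneg fun i _ => Finset.sum_nonneg fun j _ => ?_
    rcases eq_or_ne i j with rfl | hij
    · simp
    · exact mul_nonneg (mul_nonneg (hoff i j hij) (mul_nonneg (hc i).le (hc j).le))
        (sq_nonneg _)
  linarith [hBxx, esum, hSnonneg]
end

section
/- Let R be a commutative ring and v a semivaluation on R. Define the Gauss extension σ(v) on the polynomial ring R[T] by σ(v)(p) := inf_{i ∈ ℕ} ( v(p_i) + i ), where p = Σ_i p_i T^i. Then σ(v) is a semivaluation on R[T]: σ(v)(pq) = σ(v)(p) + σ(v)(q) and σ(v)(p + q) ≥ min(σ(v)(p), σ(v)(q)) for all p, q ∈ R[T], σ(v)(1) = 0 and σ(v)(0) = +∞; moreover σ(v)(T) = 1 and σ(v)(a) = v(a) for every constant polynomial a ∈ R. -/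
/-- The Gauss extension of a semivaluation `v` on `R` to the polynomial ring
`R[T]`: `σ(v)(Σ pᵢ Tⁱ) = inf_i (v pᵢ + i)`. -/
noncomputable def gaussExt {R : Type*} [CommRing R] (v : R → ENNReal)
    (p : Polynomial R) : ENNReal :=
  ⨅ i : ℕ, (v (p.coeff i) + (i : ENNReal))

section Aux

variable {R : Type*} [CommRing R] {v : R → ENNReal}

lemma semival_neg (hv : IsSemival v) (a : R) : v (-a) = v a := by
  have h1 : v ((-1 : R) * (-1)) = v (-1) + v (-1) := hv.1 _ _
  rw [neg_mul_neg, one_mul, hv.2.2.1] at h1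
  have hne : v (-1 : R) = 0 := by
    rcases (add_eq_zero.mp h1.symm) with ⟨h, _⟩; exact h
  have := hv.1 (-1 : R) a
  rw [neg_one_mul, hne, zero_add] at this
  exact this

/-- `v` of a finite sum, shifted by `e`. -/
lemma semival_le_sum (hv : IsSemival v) {ι : Type*} (s : Finset ι) (f : ι → R)
    (c e : ENNReal) (h : ∀ k ∈ s, c ≤ v (f k) + e) : c ≤ v (∑ k ∈ s, f k) + e := by
  classical
  induction s using Finset.cons_induction with
  | empty => simp [hv.2.2.2]
  | cons a s ha ih =>
    rw [Finset.sum_cons]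
    have hmin := hv.2.1 (f a) (∑ k ∈ s, f k)
    have h1 : c ≤ v (f a) + e := h a (Finset.mem_cons_self a s)
    have h2 : c ≤ v (∑ k ∈ s, f k) + e := ih fun k hk => h k (Finset.mem_cons_of_mem hk)
    rcases min_cases (v (f a)) (v (∑ k ∈ s, f k)) with ⟨hm, _⟩ | ⟨hm, _⟩
    · exact le_trans h1 (add_le_add_left (hm ▸ hmin) e)
    · exact le_trans h2 (add_le_add_left (hm ▸ hmin) e)

/-- If one term has strictly smallest value, `v` of the sum equals that value. -/
lemma semival_sum_eq (hv : IsSemival v) {ι : Type*} (s : Finset ι) (f : ι → R)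
    {i : ι} (hi : i ∈ s) (h : ∀ k ∈ s, k ≠ i → v (f i) < v (f k)) :
    v (∑ k ∈ s, f k) = v (f i) := by
  classical
  rw [← Finset.add_sum_erase s f hi]
  rcases Finset.eq_empty_or_nonempty (s.erase i) with he | he
  · simp [he]
  · set t := ∑ k ∈ s.erase i, f k with ht
    have hlt : v (f i) < v t := by
      obtain ⟨k, hk, hkeq⟩ := Finset.exists_mem_eq_inf' he (fun k => v (f k))
      have hle : (s.erase i).inf' he (fun k => v (f k)) ≤ v t + 0 := by
        refine semival_le_sum hv _ _ _ _ fun m hm => ?_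
        rw [add_zero]; exact Finset.inf'_le _ hm
      rw [add_zero] at hle
      refine lt_of_lt_of_le ?_ hle
      rw [hkeq]
      exact h k (Finset.mem_of_mem_erase hk) (Finset.ne_of_mem_erase hk)
    refine le_antisymm ?_ ?_
    · -- v (f i + t) ≤ v (f i)
      have heq : f i = (f i + t) + -t := by ring
      have hmin := hv.2.1 (f i + t) (-t)
      rw [semival_neg hv, ← heq] at hmin
      rcases min_cases (v (f i + t)) (v t) with ⟨hm, _⟩ | ⟨hm, _⟩
      · rw [hm] at hmin; exact hmin
      · exact absurd (lt_of_lt_of_le hlt (hm ▸ hmin)) (lt_irrefl _)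
    · have h2 : min (v (f i)) (v t) ≤ v (f i + t) := hv.2.1 _ _
      rwa [min_eq_left hlt.le] at h2

/-- The infimum in `gaussExt` is attained at a minimal index, when finite. -/
lemma gaussExt_attained (hv : IsSemival v) (p : Polynomial R)
    (hp : gaussExt v p ≠ ⊤) :
    ∃ i : ℕ, v (p.coeff i) + i = gaussExt v p ∧
      ∀ k < i, v (p.coeff k) + k ≠ gaussExt v p := by
  classical
  set f : ℕ → ENNReal := fun i => v (p.coeff i) + i with hf
  have htop : ∀ i, p.natDegree < i → f i = ⊤ := by
    intro i hi
    simp [hf, Polynomial.coeff_eq_zero_of_natDegree_lt hi, hv.2.2.2]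
  have hfin : gaussExt v p = (Finset.range (p.natDegree + 1)).inf f := by
    refine le_antisymm (Finset.le_inf fun i _ => iInf_le f i) (le_iInf fun i => ?_)
    by_cases hi : i ≤ p.natDegree
    · exact Finset.inf_le (Finset.mem_range.mpr (Nat.lt_succ_of_le hi))
    · have hT : v (p.coeff i) = ⊤ := by
        simp [Polynomial.coeff_eq_zero_of_natDegree_lt (not_le.mp hi), hv.2.2.2]
      rw [hT, top_add]; exact le_top
  have hne : (Finset.range (p.natDegree + 1)).Nonempty := ⟨0, by simp⟩
  obtain ⟨i, _, hieq⟩ := Finset.exists_mem_eq_inf (Finset.range (p.natDegree + 1)) hne f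
  have hex : ∃ i, f i = gaussExt v p := ⟨i, by rw [hfin, hieq]⟩
  obtain ⟨j, hj, hjmin⟩ := Nat.find_spec hex, Nat.find hex, fun k hk => Nat.find_min hex hk
  exact ⟨Nat.find hex, Nat.find_spec hex, fun k hk => Nat.find_min hex hk⟩

end Aux

/-- The Gauss extension of a semivaluation on `R` is a semivaluation on `R[T]`
sending `T` to `1` and extending `v` on constants. -/
theorem gaussExt_isSemival {R : Type*} [CommRing R] (v : R → ENNReal)
    (hv : IsSemival v) :
    IsSemival (gaussExt v) ∧
    gaussExt v (Polynomial.X : Polynomial R) = 1 ∧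
    ∀ a : R, gaussExt v (Polynomial.C a) = v a := by
  classical
  have hC : ∀ a : R, gaussExt v (Polynomial.C a) = v a := by
    intro a
    refine le_antisymm ?_ (le_iInf fun i => ?_)
    · calc gaussExt v (Polynomial.C a) ≤ v ((Polynomial.C a).coeff 0) + (0 : ℕ) :=
          iInf_le _ 0
        _ = v a := by simp
    · cases i with
      | zero => simp
      | succ n => simp [Polynomial.coeff_C, hv.2.2.2]
  have hzero : gaussExt v (0 : Polynomial R) = ⊤ := by
    simp [gaussExt, hv.2.2.2]
  have hone : gaussExt v (1 : Polynomial R) = 0 := by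
    have := hC 1
    rw [map_one, hv.2.2.1] at this
    exact this
  have hX : gaussExt v (Polynomial.X : Polynomial R) = 1 := by
    refine le_antisymm ?_ (le_iInf fun i => ?_)
    · calc gaussExt v (Polynomial.X : Polynomial R) ≤ v (Polynomial.X.coeff 1) + (1 : ℕ) :=
          iInf_le _ 1
        _ = 1 := by simp [hv.2.2.1]
    · rcases eq_or_ne i 1 with rfl | hi
      · simp [hv.2.2.1]
      · simp only [Polynomial.coeff_X, if_neg (Ne.symm hi), hv.2.2.2]
        exact le_top.trans (by simp)
  have hadd : ∀ p q : Polynomial R,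
      min (gaussExt v p) (gaussExt v q) ≤ gaussExt v (p + q) := by
    intro p q
    refine le_iInf fun i => ?_
    rw [Polynomial.coeff_add]
    have h1 := hv.2.1 (p.coeff i) (q.coeff i)
    have h2 : min (gaussExt v p) (gaussExt v q) ≤ min (v (p.coeff i)) (v (q.coeff i)) + i := by
      rcases min_cases (v (p.coeff i)) (v (q.coeff i)) with ⟨hm, _⟩ | ⟨hm, _⟩ <;> rw [hm]
      · exact le_trans (min_le_left _ _) (iInf_le (fun i => v (p.coeff i) + (i : ENNReal)) i)
      · exact le_trans (min_le_right _ _) (iInf_le (fun i => v (q.coeff i) + (i : ENNReal)) i)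
    exact h2.trans (add_le_add_left h1 i)
  have hge : ∀ p q : Polynomial R,
      gaussExt v p + gaussExt v q ≤ gaussExt v (p * q) := by
    intro p q
    refine le_iInf fun n => ?_
    rw [Polynomial.coeff_mul]
    refine semival_le_sum hv _ _ _ _ fun x hx => ?_
    have hx' : x.1 + x.2 = n := Finset.HasAntidiagonal.mem_antidiagonal.mp hx
    rw [hv.1]
    calc gaussExt v p + gaussExt v q
        ≤ (v (p.coeff x.1) + x.1) + (v (q.coeff x.2) + x.2) :=
          add_le_add (iInf_le _ x.1) (iInf_le _ x.2)
      _ = v (p.coeff x.1) + v (q.coeff x.2) + (n : ENNReal) := by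
          rw [← hx']; push_cast; ring
  have hmul : ∀ p q : Polynomial R,
      gaussExt v (p * q) = gaussExt v p + gaussExt v q := by
    intro p q
    refine le_antisymm ?_ (hge p q)
    by_cases hpq : gaussExt v p + gaussExt v q = ⊤
    · rw [hpq]; exact le_top
    · have hp : gaussExt v p ≠ ⊤ := fun h => hpq (by simp [h])
      have hq : gaussExt v q ≠ ⊤ := fun h => hpq (by simp [h])
      obtain ⟨i, hieq, himin⟩ := gaussExt_attained hv p hp
      obtain ⟨j, hjeq, hjmin⟩ := gaussExt_attained hv q hq
      have hvi : v (p.coeff i) ≠ ⊤ := fun h => hp (by rw [← hieq, h, top_add])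
      have hvj : v (q.coeff j) ≠ ⊤ := fun h => hq (by rw [← hjeq, h, top_add])
      -- key: the coefficient of degree i + j
      have hcoeff : v ((p * q).coeff (i + j)) = v (p.coeff i) + v (q.coeff j) := by
        rw [Polynomial.coeff_mul]
        have hmem : ((i, j) : ℕ × ℕ) ∈ Finset.HasAntidiagonal.antidiagonal (i + j) := by
          simp
        rw [semival_sum_eq hv _ _ hmem ?_, hv.1]
        intro x hx hne
        have hx' : x.1 + x.2 = i + j := Finset.HasAntidiagonal.mem_antidiagonal.mp hx
        rw [hv.1, hv.1]
        have hxi : x.1 ≠ i := by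
          intro h
          apply hne
          have : x.2 = j := by omega
          exact Prod.ext h this
        -- strict inequality comes from minimality
        have key : v (p.coeff i) + v (q.coeff j) + ((i : ENNReal) + j)
            < v (p.coeff x.1) + v (q.coeff x.2) + ((i : ENNReal) + j) := by
          have hAB : (v (p.coeff i) + ↑i) + (v (q.coeff j) + ↑j)
              = v (p.coeff i) + v (q.coeff j) + (↑i + ↑j) := by ring
          have hxAB : (v (p.coeff x.1) + ↑x.1) + (v (q.coeff x.2) + ↑x.2)
              = v (p.coeff x.1) + v (q.coeff x.2) + (↑i + ↑j) := by
            rw [show ((i : ENNReal) + j) = ((x.1 : ENNReal) + x.2) by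
              exact_mod_cast hx'.symm]
            ring
          rw [← hAB, ← hxAB, hieq, hjeq]
          rcases lt_or_ge x.1 i with hlt | hle
      -- case x.1 < i : strict on p side
          · have hstrict : gaussExt v p < v (p.coeff x.1) + x.1 :=
              lt_of_le_of_ne (iInf_le _ x.1) (Ne.symm (himin x.1 hlt))
            have hq' : gaussExt v q ≤ v (q.coeff x.2) + x.2 := iInf_le _ x.2
            calc gaussExt v p + gaussExt v q
                < (v (p.coeff x.1) + ↑x.1) + gaussExt v q :=
                  (ENNReal.add_lt_add_iff_right hq).mpr hstrict
              _ ≤ _ := add_le_add_right hq' _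
          · have hlt2 : x.2 < j := by omega
            have hstrict : gaussExt v q < v (q.coeff x.2) + x.2 :=
              lt_of_le_of_ne (iInf_le _ x.2) (Ne.symm (hjmin x.2 hlt2))
            have hp' : gaussExt v p ≤ v (p.coeff x.1) + x.1 := iInf_le _ x.1
            calc gaussExt v p + gaussExt v q
                < gaussExt v p + (v (q.coeff x.2) + ↑x.2) :=
                  (ENNReal.add_lt_add_iff_left hp).mpr hstrict
              _ ≤ _ := add_le_add_left hp' _
        have hij : ((i : ENNReal) + j) ≠ ⊤ := by
          simp [ENNReal.add_eq_top]
        exact (ENNReal.add_lt_add_iff_right hij).mp key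
      calc gaussExt v (p * q) ≤ v ((p * q).coeff (i + j)) + ((i + j : ℕ) : ENNReal) :=
            iInf_le _ (i + j)
        _ = (v (p.coeff i) + i) + (v (q.coeff j) + j) := by
            rw [hcoeff]; push_cast; ring
        _ = gaussExt v p + gaussExt v q := by rw [hieq, hjeq]
  exact ⟨⟨hmul, hadd, hone, hzero⟩, hX, hC⟩
end
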